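/- For every compact oriented n-manifold M, the real and rational simplicial volumes coincide: ‖M,∂M‖ = ‖M,∂M‖_ℚ. More generally, for every i the change of coefficients map H_i(M,∂M;ℚ) → H_i(M,∂M;ℝ) preserves the ℓ¹-seminorm of every class. -/

import Mathlib

open scoped BigOperators
set_option maxSynthPendingDepth 3
noncomputable section

/-! ## The standard topological simplex and singular chains -/

/-- The standard topological `n`-simplex. -/
def TSimplex (n : ℕ) : Type :=
  {x : Fin (n + 1) → ℝ // (∀ i, 0 ≤ x i) ∧ ∑ i, x i = 1}

instance (n : ℕ) : TopologicalSpace (TSimplex n) := instTopologicalSpaceSubtype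

/-- The affine inclusion of the `i`-th face of the standard `(n+1)`-simplex. -/
def faceMap {n : ℕ} (i : Fin (n + 2)) : C(TSimplex n, TSimplex (n + 1)) where
  toFun x := ⟨fun j => ∑ k ∈ Finset.univ.filter (fun k => i.succAbove k = j), x.1 k, by
    constructor
    · intro j
      exact Finset.sum_nonneg fun k _ => x.2.1 k
    · rw [Finset.sum_fiberwise_of_maps_to (fun k _ => Finset.mem_univ (i.succAbove k)), x.2.2]⟩
  continuous_toFun := by
    apply Continuous.subtype_mk
    exact continuous_pi fun j => continuous_finset_sum _ fun k _ =>
      (continuous_apply k).comp continuous_subtype_val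

/-- The `j`-th vertex of the standard simplex. -/
def vertexPt {m : ℕ} (j : Fin (m + 1)) : TSimplex m :=
  ⟨fun i => if i = j then 1 else 0, by
    constructor
    · intro i; dsimp only; split <;> norm_num
    · simp⟩

set_option linter.unnecessarySeqFocus false in
/-- The affine map of the standard `1`-simplex onto the edge of the standard `k`-simplex
joining the vertices `a` and `b`. -/
def segMap {k : ℕ} (a b : Fin (k + 1)) : C(TSimplex 1, TSimplex k) where
  toFun x := ⟨fun j => (if j = a then x.1 0 else 0) + (if j = b then x.1 1 else 0), by
    constructor
    · intro j
      have h0 := x.2.1 0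
      have h1 := x.2.1 1
      dsimp only
      split <;> split <;> simp_all <;> positivity
    · have := x.2.2
      rw [Finset.sum_add_distrib]
      simp [Finset.sum_ite_eq', ← this, Fin.sum_univ_two]⟩
  continuous_toFun := by
    apply Continuous.subtype_mk
    apply continuous_pi
    intro j
    apply Continuous.add
    · split
      · exact (continuous_apply (0 : Fin 2)).comp continuous_subtype_val
      · exact continuous_const
    · split
      · exact (continuous_apply (1 : Fin 2)).comp continuous_subtype_val
      · exact continuous_const

/-- A singular `n`-simplex in `X`. -/
abbrev SingSimplex (n : ℕ) (X : Type) [TopologicalSpace X] : Type := C(TSimplex n, X)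

/-- Singular `n`-chains in `X` with coefficients in `R`. -/
abbrev SChain (R : Type) [Zero R] (n : ℕ) (X : Type) [TopologicalSpace X] : Type :=
  SingSimplex n X →₀ R

/-- The singular boundary operator. -/
def sbdry (R : Type) [CommRing R] {n : ℕ} {X : Type} [TopologicalSpace X] :
    SChain R (n + 1) X →ₗ[R] SChain R n X :=
  Finsupp.lsum R fun σ => LinearMap.toSpanSingleton R _
    (∑ i : Fin (n + 2), ((-1 : ℤ) ^ (i : ℕ)) • Finsupp.single (σ.comp (faceMap i)) (1 : R))

/-- The singular boundary operator, from degree `n` to degree `n - 1`. -/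
def sbdryN (R : Type) [CommRing R] (n : ℕ) {X : Type} [TopologicalSpace X] :
    SChain R n X →ₗ[R] SChain R (n - 1) X :=
  match n with
  | 0 => 0
  | (_ + 1) => sbdry R

/-- The `j`-th face of a singular `n`-simplex. -/
def faceOf {X : Type} [TopologicalSpace X] :
    (n : ℕ) → Fin (n + 1) → SingSimplex n X → SingSimplex (n - 1) X
  | 0, _, σ => σ
  | (_ + 1), k, σ => σ.comp (faceMap k)

/-- The edge of a singular `k`-simplex joining its `a`-th and `b`-th vertices. -/
def edgeOf {X : Type} [TopologicalSpace X] {k : ℕ} (a b : Fin (k + 1))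
    (σ : SingSimplex k X) : SingSimplex 1 X :=
  σ.comp (segMap a b)

/-- The submodule of chains supported on a subspace `A`. -/
def suppOn (R : Type) [CommRing R] (n : ℕ) {X : Type} [TopologicalSpace X] (A : Set X) :
    Submodule R (SChain R n X) :=
  Finsupp.supported R R {σ : SingSimplex n X | Set.range ⇑σ ⊆ A}

/-- `z` is a relative cycle of the pair `(X, A)`. -/
def IsRelCycle (R : Type) [CommRing R] (n : ℕ) {X : Type} [TopologicalSpace X] (A : Set X)
    (z : SChain R n X) : Prop :=
  sbdryN R n z ∈ suppOn R (n - 1) A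

/-- Two chains are homologous relative to `A`. -/
def RelHomologous (R : Type) [CommRing R] (n : ℕ) {X : Type} [TopologicalSpace X] (A : Set X)
    (z z' : SChain R n X) : Prop :=
  ∃ w : SChain R (n + 1) X, z - z' - sbdry R w ∈ suppOn R n A

/-- The ℓ¹-norm of a relative chain: the sum of the norms of the coefficients of the
simplices not contained in `A`. -/
def relNorm {R : Type} [NormedCommRing R] {n : ℕ} {X : Type} [TopologicalSpace X]
    (A : Set X) (z : SChain R n X) : ℝ :=
  letI : DecidablePred fun σ : SingSimplex n X => ¬ Set.range ⇑σ ⊆ A :=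
    fun _ => Classical.dec _
  ∑ σ ∈ z.support.filter (fun σ : SingSimplex n X => ¬ Set.range ⇑σ ⊆ A), ‖z σ‖

/-- `c` is an integral fundamental cycle of the pair `(X, A)` in degree `n`: it is a relative
cycle whose class generates `H_n(X, A; ℤ)`.  For a compact connected oriented `n`-manifold
`X` with boundary `A`, this holds exactly for the representatives of `±[X, A]`. -/
def IsFundCycle (n : ℕ) {X : Type} [TopologicalSpace X] (A : Set X) (c : SChain ℤ n X) : Prop :=
  IsRelCycle ℤ n A c ∧
    ∀ z : SChain ℤ n X, IsRelCycle ℤ n A z → ∃ k : ℤ, RelHomologous ℤ n A z (k • c)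

/-- Change of coefficients `ℤ → ℝ` on chains. -/
def intToReal {n : ℕ} {X : Type} [TopologicalSpace X] (c : SChain ℤ n X) : SChain ℝ n X :=
  Finsupp.mapRange (fun k : ℤ => (k : ℝ)) (by norm_num) c

/-- Change of coefficients `ℤ → ℚ` on chains. -/
def intToRat {n : ℕ} {X : Type} [TopologicalSpace X] (c : SChain ℤ n X) : SChain ℚ n X :=
  Finsupp.mapRange (fun k : ℤ => (k : ℚ)) (by norm_num) c

/-- Change of coefficients `ℚ → ℝ` on chains. -/
def ratToReal {n : ℕ} {X : Type} [TopologicalSpace X] (c : SChain ℚ n X) : SChain ℝ n X :=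
  Finsupp.mapRange (fun k : ℚ => (k : ℝ)) (by norm_num) c

/-- The pair `(X, A)` is homologically orientable in degree `n`: the `n`-th relative
integral homology has a generator which is not trivial. -/
def HomOrientable (n : ℕ) (X : Type) [TopologicalSpace X] (A : Set X) : Prop :=
  ∃ c : SChain ℤ n X, IsFundCycle n A c ∧ ¬ RelHomologous ℤ n A c 0

/-- The simplicial volume of a pair `(X, A)`, where `X` is a compact connected oriented
`n`-manifold with boundary `A`: the infimum of the ℓ¹-norms of the real relative cycles
representing (the real image of) an integral fundamental class. -/
def simVolOr (n : ℕ) (X : Type) [TopologicalSpace X] (A : Set X) : ℝ :=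
  sInf {r : ℝ | ∃ z : SChain ℝ n X,
    (∃ c : SChain ℤ n X, IsFundCycle n A c ∧ RelHomologous ℝ n A z (intToReal c)) ∧
    r = relNorm A z}

/-- Rational version of `simVolOr`. -/
def simVolOrQ (n : ℕ) (X : Type) [TopologicalSpace X] (A : Set X) : ℝ :=
  sInf {r : ℝ | ∃ z : SChain ℚ n X,
    (∃ c : SChain ℤ n X, IsFundCycle n A c ∧ RelHomologous ℚ n A z (intToRat c)) ∧
    r = relNorm A z}

/-- `p` is a two-sheeted covering map. -/
def IsDoubleCover {Y X : Type} [TopologicalSpace Y] [TopologicalSpace X] (p : Y → X) : Prop :=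
  IsCoveringMap p ∧ ∀ x : X, Nat.card (p ⁻¹' {x}) = 2

/-- Simplicial volume of a connected pair: the norm of the fundamental class if the pair is
(homologically) orientable, and one half of the simplicial volume of the orientable double
cover otherwise. -/
def simVolConn (n : ℕ) (X : Type) [TopologicalSpace X] (A : Set X) : ℝ :=
  letI := Classical.propDecidable (HomOrientable n X A)
  if HomOrientable n X A then simVolOr n X A
  else (1 / 2) * sInf {r : ℝ | ∃ (Y : TopCat.{0}) (p : ↥Y → X), IsDoubleCover p ∧
    HomOrientable n ↥Y (p ⁻¹' A) ∧ r = simVolOr n ↥Y (p ⁻¹' A)}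

/-- The simplicial volume `‖X, A‖` of a compact manifold `X` with boundary `A`:
the sum over the connected components. -/
def SimVol (n : ℕ) (X : Type) [TopologicalSpace X] (A : Set X) : ℝ :=
  ∑ᶠ c : ConnectedComponents X,
    simVolConn n {x : X // ConnectedComponents.mk x = c} {x | ↑x ∈ A}

/-- Rational simplicial volume (for orientable manifolds). -/
def SimVolQ (n : ℕ) (X : Type) [TopologicalSpace X] (A : Set X) : ℝ :=
  ∑ᶠ c : ConnectedComponents X,
    simVolOrQ n {x : X // ConnectedComponents.mk x = c} {x | ↑x ∈ A}

/-! ## Topological manifolds with boundary -/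

/-- `X` is a topological `n`-manifold, possibly with boundary. -/
def IsManifoldWithBoundary (n : ℕ) (X : Type) [TopologicalSpace X] : Prop :=
  T2Space X ∧ SecondCountableTopology X ∧ ∀ x : X, ∃ U : Set X, x ∈ U ∧ IsOpen U ∧
    (Nonempty (U ≃ₜ EuclideanSpace ℝ (Fin n)) ∨
      Nonempty (U ≃ₜ {y : EuclideanSpace ℝ (Fin n) // 0 ≤ ∑ i, y i}))

/-- The boundary of a topological `n`-manifold: the points having no neighbourhood
homeomorphic to `ℝⁿ`. -/
def intBoundary (n : ℕ) (X : Type) [TopologicalSpace X] : Set X :=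
  {x | ¬ ∃ U : Set X, x ∈ U ∧ IsOpen U ∧ Nonempty (U ≃ₜ EuclideanSpace ℝ (Fin n))}

/-! A ℚ-linear map `π : ℝ → ℚ` acts coefficientwise on chains and commutes with the boundary,
whose coefficients are integers. Given a real chain `w` homologous rel `A` to a rational chain
`z`, the finitely many real coefficients of `w - z` span a finite-dimensional ℚ-subspace of `ℝ`;
approximating a ℚ-basis of it by rationals gives such a `π` that is uniformly close to the
identity on those coefficients. Then `π (w - z) + z` is a rational chain homologous to `z`, a
relative cycle if `w` and `z` are, and its ℓ¹-norm exceeds that of `w` by an arbitrarily small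
amount. -/

section ChangeOfCoefficients

variable {X : Type} [TopologicalSpace X] {R S : Type} [CommRing R] [CommRing S] {n : ℕ}

def chainMap (f : R →+ S) (n : ℕ) : SChain R n X →+ SChain S n X :=
  Finsupp.mapRange.addMonoidHom f

@[simp]
lemma chainMap_apply (f : R →+ S) (c : SChain R n X) (σ : SingSimplex n X) :
    chainMap f n c σ = f (c σ) :=
  rfl

lemma chainMap_single (f : R →+ S) (σ : SingSimplex n X) (r : R) :
    chainMap f n (Finsupp.single σ r) = Finsupp.single σ (f r) :=
  Finsupp.mapRange_single (hf := f.map_zero)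

lemma sbdry_single (σ : SingSimplex (n + 1) X) (r : R) :
    sbdry R (Finsupp.single σ r) =
      ∑ i : Fin (n + 2), ((-1 : ℤ) ^ (i : ℕ)) • Finsupp.single (σ.comp (faceMap i)) r := by
  rw [sbdry, Finsupp.lsum_single, LinearMap.toSpanSingleton_apply, Finset.smul_sum]
  refine Finset.sum_congr rfl fun i _ => ?_
  rw [smul_comm, Finsupp.smul_single_one]

lemma chainMap_sbdry (f : R →+ S) (c : SChain R (n + 1) X) :
    chainMap f n (sbdry R c) = sbdry S (chainMap f (n + 1) c) := by
  induction c using Finsupp.induction_linear with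
  | zero => simp
  | add a b ha hb => simp [ha, hb]
  | single σ r => simp only [sbdry_single, map_sum, map_zsmul, chainMap_single]

lemma chainMap_sbdryN (f : R →+ S) (c : SChain R n X) :
    chainMap f (n - 1) (sbdryN R n c) = sbdryN S n (chainMap f n c) := by
  cases n with
  | zero => simp [sbdryN]
  | succ n => exact chainMap_sbdry f c

lemma chainMap_mem_suppOn (f : R →+ S) {A : Set X} {c : SChain R n X}
    (hc : c ∈ suppOn R n A) : chainMap f n c ∈ suppOn S n A :=
  (Finsupp.mem_supported' _ _).2 fun σ hσ => by
    rw [chainMap_apply, (Finsupp.mem_supported' _ _).1 hc σ hσ, map_zero]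

lemma IsRelCycle.map (f : R →+ S) {A : Set X} {c : SChain R n X}
    (hc : IsRelCycle R n A c) : IsRelCycle S n A (chainMap f n c) := by
  rw [IsRelCycle, ← chainMap_sbdryN]
  exact chainMap_mem_suppOn f hc

lemma IsRelCycle.add {A : Set X} {c c' : SChain R n X} (hc : IsRelCycle R n A c)
    (hc' : IsRelCycle R n A c') : IsRelCycle R n A (c + c') := by
  rw [IsRelCycle, map_add]
  exact add_mem hc hc'

lemma IsRelCycle.sub {A : Set X} {c c' : SChain R n X} (hc : IsRelCycle R n A c)
    (hc' : IsRelCycle R n A c') : IsRelCycle R n A (c - c') := by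
  rw [IsRelCycle, map_sub]
  exact sub_mem hc hc'

lemma RelHomologous.map (f : R →+ S) {A : Set X} {c c' : SChain R n X}
    (h : RelHomologous R n A c c') :
    RelHomologous S n A (chainMap f n c) (chainMap f n c') := by
  obtain ⟨w, hw⟩ := h
  refine ⟨chainMap f (n + 1) w, ?_⟩
  rw [← chainMap_sbdry, ← map_sub, ← map_sub]
  exact chainMap_mem_suppOn f hw

end ChangeOfCoefficients

section RelNorm

variable {X : Type} [TopologicalSpace X] {R : Type} [NormedCommRing R] {n : ℕ}

open Classical in
lemma relNorm_eq_sum_of_support_subset (A : Set X) {z : SChain R n X}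
    {s : Finset (SingSimplex n X)} (hs : z.support ⊆ s) :
    relNorm A z = ∑ σ ∈ s, if ¬ Set.range σ ⊆ A then ‖z σ‖ else 0 := by
  rw [relNorm, Finset.sum_filter]
  refine (Finset.sum_subset hs fun σ _ hσ => ?_).trans (Finset.sum_congr rfl fun σ _ => ?_)
  · rw [Finsupp.notMem_support_iff.1 hσ, norm_zero, ite_self]
  · congr

lemma relNorm_nonneg (A : Set X) (z : SChain R n X) : 0 ≤ relNorm A z :=
  Finset.sum_nonneg fun _ _ => norm_nonneg _

lemma relNorm_add_le (A : Set X) (a b : SChain R n X) :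
    relNorm A (a + b) ≤ relNorm A a + relNorm A b := by
  classical
  rw [relNorm_eq_sum_of_support_subset A (Finsupp.support_add (g₁ := a) (g₂ := b)),
    relNorm_eq_sum_of_support_subset A Finset.subset_union_left,
    relNorm_eq_sum_of_support_subset A Finset.subset_union_right, ← Finset.sum_add_distrib]
  gcongr with σ
  split_ifs
  · simp
  · exact norm_add_le _ _

lemma relNorm_le_card_mul (A : Set X) {z : SChain R n X} {s : Finset (SingSimplex n X)}
    (hs : z.support ⊆ s) {δ : ℝ} (hδ : ∀ σ ∈ s, ‖z σ‖ ≤ δ) : relNorm A z ≤ s.card * δ := by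
  classical
  rw [relNorm_eq_sum_of_support_subset A hs, ← nsmul_eq_mul]
  refine Finset.sum_le_card_nsmul _ _ _ fun σ hσ => ?_
  split_ifs
  · exact (norm_nonneg _).trans (hδ σ hσ)
  · exact hδ σ hσ

end RelNorm

lemma sInf_eq_sInf_of_subset_of_forall_le_add {S T : Set ℝ} (hT : BddBelow T) (hST : S ⊆ T)
    (happrox : ∀ r ∈ T, ∀ ε > 0, ∃ r' ∈ S, r' ≤ r + ε) : sInf S = sInf T := by
  rcases T.eq_empty_or_nonempty with rfl | hTne
  · rw [Set.subset_empty_iff.1 hST]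
  obtain ⟨r₀, hr₀⟩ := hTne
  obtain ⟨r₁, hr₁, -⟩ := happrox r₀ hr₀ 1 one_pos
  refine le_antisymm (le_csInf ⟨r₀, hr₀⟩ fun r hr => ?_) (csInf_le_csInf hT ⟨r₁, hr₁⟩ hST)
  refine le_of_forall_pos_le_add fun ε hε => ?_
  obtain ⟨r', hr', hle⟩ := happrox r hr ε hε
  exact (csInf_le (hT.mono hST) hr').trans hle

theorem exists_linearMap_rat_abs_sub_lt (s : Finset ℝ) {δ : ℝ} (hδ : 0 < δ) :
    ∃ π : ℝ →ₗ[ℚ] ℚ, ∀ x ∈ s, |(π x : ℝ) - x| < δ := by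
  set V := Submodule.span ℚ (s : Set ℝ)
  set b := Module.finBasis ℚ V
  have hsV : ∀ x ∈ s, x ∈ V := fun x hx => Submodule.subset_span hx
  let F : (Fin (Module.finrank ℚ V) → ℝ) → V → ℝ := fun c v => ∑ i, (b.repr v i : ℝ) * c i
  have hF : ∀ v, F (fun i => b i) v = v := fun v => calc
    F (fun i => b i) v = ((∑ i, b.repr v i • b i : V) : ℝ) := by
      simp only [F, Submodule.coe_sum, Submodule.coe_smul, Rat.smul_def]
    _ = v := by rw [b.sum_repr]
  let U := ⋂ x : s, {c | |F c ⟨x, hsV x x.2⟩ - x| < δ}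
  have hU : IsOpen U := isOpen_iInter_of_finite fun x =>
    isOpen_lt (by fun_prop) continuous_const
  have hbU : (fun i => (b i : ℝ)) ∈ U := Set.mem_iInter.2 fun x => by simp [hF, hδ]
  obtain ⟨q, hq⟩ := (DenseRange.piMap fun _ => Rat.denseRange_cast (𝕜 := ℝ)).exists_mem_open
    hU ⟨_, hbU⟩
  obtain ⟨π, hπ⟩ := LinearMap.exists_extend (b.constr ℚ q)
  refine ⟨π, fun x hx => ?_⟩
  have hπx : (π x : ℝ) = F (fun i => q i) ⟨x, hsV x hx⟩ := by
    have := LinearMap.congr_fun hπ ⟨x, hsV x hx⟩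
    simp only [LinearMap.comp_apply, Submodule.subtype_apply] at this
    simp [F, this, Module.Basis.constr_apply_fintype]
  rw [hπx]
  exact Set.mem_iInter.1 hq ⟨x, hx⟩

section RationalApproximation

variable {X : Type} [TopologicalSpace X] {n : ℕ}

lemma ratToReal_eq_chainMap (z : SChain ℚ n X) :
    ratToReal z = chainMap (Rat.castHom ℝ : ℚ →+ ℝ) n z :=
  rfl

lemma intToReal_eq_ratToReal_intToRat (c : SChain ℤ n X) :
    intToReal c = ratToReal (intToRat c) := by
  ext σ
  simp [intToReal, intToRat, ratToReal]

lemma relNorm_ratToReal (A : Set X) (z : SChain ℚ n X) :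
    relNorm A (ratToReal z) = relNorm A z := by
  classical
  have hs : (ratToReal z).support ⊆ z.support := Finsupp.support_mapRange
  rw [relNorm_eq_sum_of_support_subset A hs, relNorm_eq_sum_of_support_subset A subset_rfl]
  simp only [ratToReal, Finsupp.mapRange_apply, Rat.norm_cast_real]

lemma exists_linearMap_rat_relNorm_le (A : Set X) (u : SChain ℝ n X) {ε : ℝ} (hε : 0 < ε) :
    ∃ π : ℝ →ₗ[ℚ] ℚ, relNorm A (ratToReal (chainMap π.toAddMonoidHom n u) - u) ≤ ε := by
  set N : ℝ := (u.support.card : ℝ)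
  have hδ : 0 < ε / (N + 1) := by positivity
  obtain ⟨π, hπ⟩ := exists_linearMap_rat_abs_sub_lt (u.support.image u) hδ
  refine ⟨π, ?_⟩
  set d := ratToReal (chainMap π.toAddMonoidHom n u) - u
  have hd : ∀ σ, d σ = π (u σ) - u σ := fun σ => by simp [d, ratToReal]
  have hds : d.support ⊆ u.support := fun σ hσ => by
    by_contra hu
    simp [Finsupp.notMem_support_iff.1 hu, hd] at hσ
  calc relNorm A d ≤ N * (ε / (N + 1)) := relNorm_le_card_mul A hds fun σ hσ => by
        rw [hd, Real.norm_eq_abs]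
        exact (hπ _ (Finset.mem_image_of_mem u hσ)).le
    _ ≤ ε := by
      rw [mul_div_assoc', div_le_iff₀ (by positivity)]
      nlinarith

theorem exists_rat_relHomologous_relNorm_le {A : Set X} {w : SChain ℝ n X} {y : SChain ℚ n X}
    (h : RelHomologous ℝ n A w (ratToReal y)) {ε : ℝ} (hε : 0 < ε) :
    ∃ y' : SChain ℚ n X, RelHomologous ℚ n A y' y ∧
      (IsRelCycle ℝ n A w → IsRelCycle ℚ n A y → IsRelCycle ℚ n A y') ∧
      relNorm A y' ≤ relNorm A w + ε := by
  obtain ⟨π, hπ⟩ := exists_linearMap_rat_relNorm_le A (w - ratToReal y) hε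
  set p : ℝ →+ ℚ := π.toAddMonoidHom
  refine ⟨chainMap p n (w - ratToReal y) + y, ?_, fun hw hy => ?_, ?_⟩
  · obtain ⟨W, hW⟩ := h
    refine ⟨chainMap p (n + 1) W, ?_⟩
    have : chainMap p n (w - ratToReal y) + y - y - sbdry ℚ (chainMap p (n + 1) W) =
        chainMap p n (w - ratToReal y - sbdry ℝ W) := by
      rw [map_sub _ _ (sbdry ℝ W), chainMap_sbdry]
      abel
    rw [this]
    exact chainMap_mem_suppOn p hW
  · exact ((hw.sub (hy.map (Rat.castHom ℝ : ℚ →+ ℝ))).map p).add hy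
  · calc relNorm A (chainMap p n (w - ratToReal y) + y)
        = relNorm A (w + (ratToReal (chainMap p n (w - ratToReal y)) - (w - ratToReal y))) := by
          rw [← relNorm_ratToReal]
          congr 1
          simp only [ratToReal_eq_chainMap, map_add]
          abel
      _ ≤ relNorm A w + ε := (relNorm_add_le A _ _).trans (by gcongr)

lemma simVolOr_eq_simVolOrQ (A : Set X) : simVolOr n X A = simVolOrQ n X A := by
  refine (sInf_eq_sInf_of_subset_of_forall_le_add ?_ ?_ ?_).symm
  · exact ⟨0, by rintro r ⟨z, -, rfl⟩; exact relNorm_nonneg A z⟩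
  · rintro r ⟨z, ⟨c, hc, hz⟩, rfl⟩
    refine ⟨ratToReal z, ⟨c, hc, ?_⟩, (relNorm_ratToReal A z).symm⟩
    rw [intToReal_eq_ratToReal_intToRat]
    exact hz.map (Rat.castHom ℝ : ℚ →+ ℝ)
  · rintro r ⟨w, ⟨c, hc, hw⟩, rfl⟩ ε hε
    rw [intToReal_eq_ratToReal_intToRat] at hw
    obtain ⟨y, hy, -, hle⟩ := exists_rat_relHomologous_relNorm_le hw hε
    exact ⟨_, ⟨y, ⟨c, hc, hy⟩, rfl⟩, hle⟩

lemma sInf_relNorm_rat_eq_sInf_relNorm_real {A : Set X} {z : SChain ℚ n X}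
    (hz : IsRelCycle ℚ n A z) :
    sInf {r : ℝ | ∃ z' : SChain ℚ n X, IsRelCycle ℚ n A z' ∧
        RelHomologous ℚ n A z' z ∧ r = relNorm A z'} =
    sInf {r : ℝ | ∃ w : SChain ℝ n X, IsRelCycle ℝ n A w ∧
        RelHomologous ℝ n A w (ratToReal z) ∧ r = relNorm A w} := by
  refine sInf_eq_sInf_of_subset_of_forall_le_add ?_ ?_ ?_
  · exact ⟨0, by rintro r ⟨w, -, -, rfl⟩; exact relNorm_nonneg A w⟩
  · rintro r ⟨z', hz', hhom, rfl⟩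
    exact ⟨ratToReal z', hz'.map (Rat.castHom ℝ : ℚ →+ ℝ),
      hhom.map (Rat.castHom ℝ : ℚ →+ ℝ), (relNorm_ratToReal A z').symm⟩
  · rintro r ⟨w, hw, hhom, rfl⟩ ε hε
    obtain ⟨y, hy, hcyc, hle⟩ := exists_rat_relHomologous_relNorm_le hhom hε
    exact ⟨_, ⟨y, hcyc hw hz, hy, rfl⟩, hle⟩

end RationalApproximation

theorem simvol_rational_eq_real_general (n : ℕ) (M : Type) [TopologicalSpace M]
    (hor : ∀ c : ConnectedComponents M,
      HomOrientable n {x : M // ConnectedComponents.mk x = c}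
        {x : {x : M // ConnectedComponents.mk x = c} | ↑x ∈ intBoundary n M}) :
    SimVol n M (intBoundary n M) = SimVolQ n M (intBoundary n M) ∧
    ∀ (i : ℕ) (z : SChain ℚ i M), IsRelCycle ℚ i (intBoundary n M) z →
      sInf {r : ℝ | ∃ z' : SChain ℚ i M, IsRelCycle ℚ i (intBoundary n M) z' ∧
          RelHomologous ℚ i (intBoundary n M) z' z ∧ r = relNorm (intBoundary n M) z'} =
      sInf {r : ℝ | ∃ w : SChain ℝ i M, IsRelCycle ℝ i (intBoundary n M) w ∧
          RelHomologous ℝ i (intBoundary n M) w (ratToReal z) ∧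
          r = relNorm (intBoundary n M) w} := by
  refine ⟨finsum_congr fun c => ?_, fun i z hz => sInf_relNorm_rat_eq_sInf_relNorm_real hz⟩
  rw [simVolConn, if_pos (hor c)]
  exact simVolOr_eq_simVolOrQ _

/-- **Statement 10.**  For every compact oriented `n`-manifold the real and rational
simplicial volumes coincide; more generally, for every `i` the change of coefficients map
`H_i(M, ∂M; ℚ) → H_i(M, ∂M; ℝ)` preserves the ℓ¹-seminorm of every class. -/
theorem simvol_rational_eq_real (n : ℕ) (M : Type) [TopologicalSpace M] [CompactSpace M]
    (hM : IsManifoldWithBoundary n M)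
    (hor : ∀ c : ConnectedComponents M,
      HomOrientable n {x : M // ConnectedComponents.mk x = c}
        {x : {x : M // ConnectedComponents.mk x = c} | ↑x ∈ intBoundary n M}) :
    SimVol n M (intBoundary n M) = SimVolQ n M (intBoundary n M) ∧
    ∀ (i : ℕ) (z : SChain ℚ i M), IsRelCycle ℚ i (intBoundary n M) z →
      sInf {r : ℝ | ∃ z' : SChain ℚ i M, IsRelCycle ℚ i (intBoundary n M) z' ∧
          RelHomologous ℚ i (intBoundary n M) z' z ∧ r = relNorm (intBoundary n M) z'} =
      sInf {r : ℝ | ∃ w : SChain ℝ i M, IsRelCycle ℝ i (intBoundary n M) w ∧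
          RelHomologous ℝ i (intBoundary n M) w (ratToReal z) ∧
          r = relNorm (intBoundary n M) w} :=
  simvol_rational_eq_real_general n M hor

end
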